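/- Let X be a normed space whose norm is Fréchet differentiable at every nonzero point, let Z be a normed space, and let g : X → Z be a mapping of the stable first Baire class. Then there exists a mapping f : X² → Z with diagonal g (i.e. f(x,x) = g(x) for all x ∈ X) such that for every fixed y ∈ X the map x ↦ f(x,y) is continuous, and for every fixed x ∈ X the map y ↦ f(x,y) is Lipschitz and Fréchet differentiable. -/

import Mathlib

open Set Filter Topology NNReal

open Metric

/-- The bump profile: `1` on `[0,1/2]`, `0` on `[1,∞)`. -/
noncomputable def auxPhiR : ℝ → ℝ := fun t => Real.smoothTransition (2 - 2 * t)

lemma auxPhiR_one {t : ℝ} (h : t ≤ 1/2) : auxPhiR t = 1 :=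
  Real.smoothTransition.one_of_one_le (by linarith)

lemma auxPhiR_zero {t : ℝ} (h : 1 ≤ t) : auxPhiR t = 0 :=
  Real.smoothTransition.zero_of_nonpos (by linarith)

lemma auxPhiR_abs_le (t : ℝ) : |auxPhiR t| ≤ 1 := by
  unfold auxPhiR; rw [abs_le]
  exact ⟨by linarith [Real.smoothTransition.nonneg (2 - 2*t)],
    Real.smoothTransition.le_one (2 - 2*t)⟩

lemma smoothTransition_lipschitz : ∃ K : ℝ≥0, LipschitzWith K Real.smoothTransition := by
  have hd : Differentiable ℝ Real.smoothTransition :=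
    (Real.smoothTransition.contDiff (n := 1)).differentiable one_ne_zero
  have hc : Continuous (deriv Real.smoothTransition) :=
    (Real.smoothTransition.contDiff (n := (1 : ℕ∞))).continuous_deriv le_rfl
  obtain ⟨C, hC⟩ : ∃ C, ∀ t ∈ Icc (0:ℝ) 1, ‖deriv Real.smoothTransition t‖ ≤ C := by
    obtain ⟨t₀, _, ht₀⟩ := (isCompact_Icc (a := (0:ℝ)) (b := 1)).exists_isMaxOn
      (nonempty_Icc.2 zero_le_one) (hc.norm.continuousOn)
    exact ⟨‖deriv Real.smoothTransition t₀‖, fun t ht => ht₀ ht⟩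
  have hC0 : 0 ≤ C := le_trans (norm_nonneg _) (hC 0 ⟨le_rfl, zero_le_one⟩)
  refine ⟨⟨C, hC0⟩, lipschitzWith_of_nnnorm_deriv_le hd fun t => ?_⟩
  have : ‖deriv Real.smoothTransition t‖ ≤ C := by
    rcases lt_or_ge t 0 with h | h
    · have heq : Real.smoothTransition =ᶠ[𝓝 t] fun _ => (0:ℝ) := by
        filter_upwards [Iio_mem_nhds h] with u hu
        exact Real.smoothTransition.zero_of_nonpos (le_of_lt hu)
      rw [heq.deriv_eq, deriv_const]
      simpa using hC0
    rcases le_or_gt t 1 with h1 | h1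
    · exact hC t ⟨h, h1⟩
    · have heq : Real.smoothTransition =ᶠ[𝓝 t] fun _ => (1:ℝ) := by
        filter_upwards [Ioi_mem_nhds h1] with u hu
        exact Real.smoothTransition.one_of_one_le (le_of_lt hu)
      rw [heq.deriv_eq, deriv_const]
      simpa using hC0
  exact_mod_cast this

lemma auxPhiR_lipschitz : ∃ K : ℝ≥0, LipschitzWith K auxPhiR := by
  obtain ⟨K, hK⟩ := smoothTransition_lipschitz
  refine ⟨K * 2, ?_⟩
  have h2 : LipschitzWith 2 (fun t : ℝ => 2 - 2 * t) := by
    apply LipschitzWith.of_dist_le_mul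
    intro a b
    rw [Real.dist_eq, Real.dist_eq]
    have : (2 - 2*a) - (2 - 2*b) = -(2*(a-b)) := by ring
    rw [this, abs_neg, abs_mul]
    simp [abs_two]
  exact hK.comp h2

lemma auxPhiR_differentiable : Differentiable ℝ auxPhiR := by
  intro t
  exact (((Real.smoothTransition.contDiff (n := 1)).differentiable one_ne_zero) _).comp t
    (((differentiable_const (2:ℝ)).sub ((differentiable_id).const_mul 2)) t)

section Bump

variable {X : Type*} [NormedAddCommGroup X] [NormedSpace ℝ X]

/-- The bump on `X`: `1` near `0`, `0` outside the unit ball. -/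
noncomputable def auxPhi (X : Type*) [NormedAddCommGroup X] : X → ℝ := fun v => auxPhiR ‖v‖

lemma auxPhi_zero : auxPhi X 0 = 1 := by simp [auxPhi, auxPhiR_one]

lemma auxPhi_of_one_le {v : X} (h : 1 ≤ ‖v‖) : auxPhi X v = 0 := auxPhiR_zero h

lemma auxPhi_abs_le (v : X) : |auxPhi X v| ≤ 1 := auxPhiR_abs_le _

lemma auxPhi_lipschitz : ∃ K : ℝ≥0, LipschitzWith K (auxPhi X) := by
  obtain ⟨K, hK⟩ := auxPhiR_lipschitz
  exact ⟨K * 1, hK.comp lipschitzWith_one_norm⟩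

lemma auxPhi_differentiable
    (hnorm : ∀ x : X, x ≠ 0 → DifferentiableAt ℝ (fun y : X => ‖y‖) x) :
    Differentiable ℝ (auxPhi X) := by
  intro v
  rcases lt_or_ge ‖v‖ (1/2) with h | h
  · have heq : auxPhi X =ᶠ[𝓝 v] fun _ => (1:ℝ) := by
      filter_upwards [continuous_norm.continuousAt.preimage_mem_nhds (Iio_mem_nhds h)] with u hu
      exact auxPhiR_one (le_of_lt hu)
    exact (Filter.EventuallyEq.differentiableAt_iff heq).2 (differentiableAt_const 1)
  · have hv : v ≠ 0 := by
      intro h0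
      rw [h0, norm_zero] at h
      linarith
    exact (auxPhiR_differentiable ‖v‖).comp v (hnorm v hv)

end Bump

section Rad

variable {X Z : Type*} [NormedAddCommGroup X] [NormedAddCommGroup Z]

/-- The set of radii `s ≤ 1` such that `Δ` oscillates at most `ε` on `ball x s`. -/
def auxSet (Δ : X → Z) (ε : ℝ) (x : X) : Set ℝ :=
  {s : ℝ | s ∈ Icc (0:ℝ) 1 ∧ ∀ u ∈ ball x s, ∀ v ∈ ball x s, ‖Δ u - Δ v‖ ≤ ε}

/-- A continuous (1-Lipschitz) positive radius function controlling the oscillation of `Δ`. -/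
noncomputable def auxRad (Δ : X → Z) (ε : ℝ) (x : X) : ℝ := sSup (auxSet Δ ε x)

variable {Δ : X → Z} {ε : ℝ} {x : X}

lemma auxSet_zero_mem : (0:ℝ) ∈ auxSet Δ ε x := by
  refine ⟨⟨le_rfl, zero_le_one⟩, fun u hu => ?_⟩
  simp [ball_zero] at hu

lemma auxSet_bddAbove : BddAbove (auxSet Δ ε x) := ⟨1, fun s hs => hs.1.2⟩

lemma le_auxRad {s : ℝ} (hs : s ∈ auxSet Δ ε x) : s ≤ auxRad Δ ε x :=
  le_csSup auxSet_bddAbove hs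

lemma auxRad_nonneg : 0 ≤ auxRad Δ ε x := le_auxRad auxSet_zero_mem

lemma auxRad_le_one : auxRad Δ ε x ≤ 1 :=
  csSup_le ⟨0, auxSet_zero_mem⟩ fun s hs => hs.1.2

lemma auxRad_pos (hΔ : Continuous Δ) (hε : 0 < ε) : 0 < auxRad Δ ε x := by
  obtain ⟨δ, hδ, hball⟩ := Metric.continuousAt_iff.1 (hΔ.continuousAt (x := x)) (ε/2)
    (by linarith)
  have hle : min δ 1 / 2 ≤ δ := by
    have h1 := min_le_left δ 1
    linarith
  have hmem : min δ 1 / 2 ∈ auxSet Δ ε x := by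
    refine ⟨⟨by positivity, by
      have : min δ 1 ≤ 1 := min_le_right _ _
      linarith⟩, fun u hu v hv => ?_⟩
    have hu' : dist u x < δ := lt_of_lt_of_le (mem_ball.1 hu) hle
    have hv' : dist v x < δ := lt_of_lt_of_le (mem_ball.1 hv) hle
    have h1 := hball hu'
    have h2 := hball hv'
    rw [dist_eq_norm] at h1 h2
    calc ‖Δ u - Δ v‖ = ‖(Δ u - Δ x) + (Δ x - Δ v)‖ := by abel_nf
      _ ≤ ‖Δ u - Δ x‖ + ‖Δ x - Δ v‖ := norm_add_le _ _
      _ ≤ ε/2 + ε/2 := by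
          rw [← norm_neg (Δ x - Δ v)]
          simp only [neg_sub]
          exact add_le_add h1.le h2.le
      _ = ε := by ring
  calc (0:ℝ) < min δ 1 / 2 := by positivity
    _ ≤ auxRad Δ ε x := le_auxRad hmem

lemma auxRad_spec {u v : X} (hu : u ∈ ball x (auxRad Δ ε x)) (hv : v ∈ ball x (auxRad Δ ε x)) :
    ‖Δ u - Δ v‖ ≤ ε := by
  obtain ⟨s, hsS, hs⟩ := exists_lt_of_lt_csSup ⟨0, auxSet_zero_mem⟩
    (show max (dist u x) (dist v x) < auxRad Δ ε x from max_lt (mem_ball.1 hu) (mem_ball.1 hv))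
  exact hsS.2 u (mem_ball.2 (lt_of_le_of_lt (le_max_left _ _) hs))
    v (mem_ball.2 (lt_of_le_of_lt (le_max_right _ _) hs))

lemma auxRad_lipschitz : LipschitzWith 1 (auxRad Δ ε) := by
  have key : ∀ x y : X, auxRad Δ ε x ≤ auxRad Δ ε y + dist x y := by
    intro x y
    refine csSup_le ⟨0, auxSet_zero_mem⟩ fun s hs => ?_
    rcases le_or_gt s (dist x y) with h | h
    · linarith [auxRad_nonneg (Δ := Δ) (ε := ε) (x := y)]
    · have hmem : s - dist x y ∈ auxSet Δ ε y := by
        refine ⟨⟨by linarith [dist_nonneg (x := x) (y := y)], by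
          have h1 : s ≤ 1 := hs.1.2
          have h2 : (0:ℝ) ≤ dist x y := dist_nonneg
          linarith⟩, fun u hu v hv => ?_⟩
        have hsub : ball y (s - dist x y) ⊆ ball x s := by
          intro w hw
          rw [mem_ball] at hw ⊢
          calc dist w x ≤ dist w y + dist y x := dist_triangle _ _ _
            _ < (s - dist x y) + dist y x := by linarith
            _ = s := by rw [dist_comm y x]; ring
        exact hs.2 u (hsub hu) v (hsub hv)
      linarith [le_auxRad hmem]
  refine LipschitzWith.of_dist_le_mul fun x y => ?_
  rw [Real.dist_eq, NNReal.coe_one, one_mul, abs_sub_le_iff]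
  constructor
  · linarith [key x y]
  · linarith [key y x, dist_comm x y]

lemma auxRad_continuous : Continuous (auxRad Δ ε) := auxRad_lipschitz.continuous

end Rad

/-- Theorem 7.2, implication (i) ⇒ (ii): for a normed space `X` whose norm is Fréchet
differentiable at every nonzero point, a normed space `Z` and a mapping `g : X → Z` of
the stable first Baire class, there exists a mapping `f : X² → Z` with diagonal `g`
which is continuous in the first variable and Lipschitz and Fréchet differentiable in
the second one. -/
theorem stmt_14 {X Z : Type*} [NormedAddCommGroup X] [NormedSpace ℝ X]
    [NormedAddCommGroup Z] [NormedSpace ℝ Z]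
    (hnorm : ∀ x : X, x ≠ 0 → DifferentiableAt ℝ (fun y : X => ‖y‖) x)
    (g : X → Z)
    (hg : ∃ gs : ℕ → X → Z, (∀ n, Continuous (gs n)) ∧
      ∀ x, ∃ N : ℕ, ∀ n ≥ N, gs n x = g x) :
    ∃ f : X → X → Z, (∀ x, f x x = g x) ∧
      (∀ y, Continuous fun x => f x y) ∧
      (∀ x, (∃ K : ℝ≥0, LipschitzWith K (f x)) ∧ Differentiable ℝ (f x)) := by
  classical
  obtain ⟨gs, hgs_cont, hgs_stab⟩ := hg
  choose N hN using hgs_stab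
  set Δ : ℕ → X → Z := fun n x => gs (n+1) x - gs n x with hΔdef
  have hΔcont : ∀ n, Continuous (Δ n) := fun n => (hgs_cont (n+1)).sub (hgs_cont n)
  have hΔ0 : ∀ x n, N x ≤ n → Δ n x = 0 := by
    intro x n hn
    simp only [hΔdef]
    rw [hN x (n+1) (le_trans hn (Nat.le_succ n)), hN x n hn, sub_self]
  set ε : ℕ → ℝ := fun n => (1/2:ℝ)^n with hεdef
  have hεpos : ∀ n, 0 < ε n := fun n => by positivity
  set ρ : ℕ → X → ℝ := fun n x => min (ε n) (auxRad (Δ n) (ε n) x) / 4 with hρdef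
  have hρpos : ∀ n x, 0 < ρ n x := by
    intro n x
    have h1 := auxRad_pos (Δ := Δ n) (ε := ε n) (x := x) (hΔcont n) (hεpos n)
    have h2 := hεpos n
    simp only [hρdef]
    have : 0 < min (ε n) (auxRad (Δ n) (ε n) x) := lt_min h2 h1
    linarith
  have hρcont : ∀ n, Continuous (ρ n) :=
    fun n => ((continuous_const.min auxRad_continuous).div_const 4)
  have hρ_lt_rad : ∀ n x, ρ n x < auxRad (Δ n) (ε n) x := by
    intro n x
    have h1 := auxRad_pos (Δ := Δ n) (ε := ε n) (x := x) (hΔcont n) (hεpos n)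
    have h2 : min (ε n) (auxRad (Δ n) (ε n) x) ≤ auxRad (Δ n) (ε n) x := min_le_right _ _
    simp only [hρdef]
    linarith
  have hρ_le_ε : ∀ n x, ρ n x ≤ ε n := by
    intro n x
    have h2 : min (ε n) (auxRad (Δ n) (ε n) x) ≤ ε n := min_le_left _ _
    have h3 : 0 < ρ n x := hρpos n x
    simp only [hρdef] at h3 ⊢
    linarith
  set term : ℕ → X → X → Z :=
    fun n x y => auxPhi X ((ρ n x)⁻¹ • (y - x)) • Δ n x with htermdef
  have hterm_zero : ∀ n x y, ρ n x ≤ dist y x → term n x y = 0 := by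
    intro n x y h
    have h1 : (1:ℝ) ≤ ‖(ρ n x)⁻¹ • (y - x)‖ := by
      rw [norm_smul, Real.norm_eq_abs, abs_inv, abs_of_pos (hρpos n x)]
      rw [← dist_eq_norm y x] at *
      rw [← div_eq_inv_mul, le_div_iff₀ (hρpos n x), one_mul]
      exact h
    simp only [htermdef]
    rw [auxPhi_of_one_le h1, zero_smul]
  have hterm_stab : ∀ n x y, N x ≤ n → term n x y = 0 := by
    intro n x y hn
    simp only [htermdef]
    rw [hΔ0 x n hn, smul_zero]
  have hterm_norm : ∀ n x y, ‖term n x y‖ ≤ ‖Δ n x‖ := by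
    intro n x y
    simp only [htermdef]
    rw [norm_smul, Real.norm_eq_abs]
    calc |auxPhi X ((ρ n x)⁻¹ • (y - x))| * ‖Δ n x‖ ≤ 1 * ‖Δ n x‖ :=
          mul_le_mul_of_nonneg_right (auxPhi_abs_le _) (norm_nonneg _)
      _ = ‖Δ n x‖ := one_mul _
  have hsummable : ∀ x y, Summable (fun n => term n x y) := by
    intro x y
    refine summable_of_ne_finset_zero (s := Finset.range (N x)) fun n hn => ?_
    exact hterm_stab n x y (Nat.le_of_not_lt fun h => hn (Finset.mem_range.2 h))
  set f : X → X → Z := fun x y => gs 0 x + ∑' n, term n x y with hfdef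
  have hfeq : ∀ x y, f x y = gs 0 x + ∑ n ∈ Finset.range (N x), term n x y := by
    intro x y
    simp only [hfdef]
    rw [tsum_eq_sum (s := Finset.range (N x))
      fun n hn => hterm_stab n x y (Nat.le_of_not_lt fun h => hn (Finset.mem_range.2 h))]
  have hkey : ∀ x₀ y, ∃ δ > 0, ∀ x, dist x x₀ < δ → ∀ n, N x₀ ≤ n → ‖term n x y‖ ≤ ε n := by
    intro x₀ y
    refine ⟨if y = x₀ then 1 else dist y x₀ / 2, by
      split
      · norm_num
      · rename_i hne
        have := dist_pos.2 hne
        linarith, ?_⟩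
    intro x hx n hn
    by_cases hz : term n x y = 0
    · rw [hz, norm_zero]
      exact (hεpos n).le
    · have hdyx : dist y x < ρ n x := lt_of_not_ge fun h => hz (hterm_zero n x y h)
      have hx₀ball : dist x₀ x < auxRad (Δ n) (ε n) x := by
        by_cases hcase : y = x₀
        · subst hcase
          calc dist y x < ρ n x := hdyx
            _ < auxRad (Δ n) (ε n) x := hρ_lt_rad n x
        · rw [if_neg hcase] at hx
          have h1 : dist y x₀ ≤ dist y x + dist x x₀ := dist_triangle _ _ _
          calc dist x₀ x = dist x x₀ := dist_comm _ _
            _ < dist y x₀ / 2 := hx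
            _ ≤ dist y x := by linarith
            _ < ρ n x := hdyx
            _ < auxRad (Δ n) (ε n) x := hρ_lt_rad n x
      have hosc : ‖Δ n x - Δ n x₀‖ ≤ ε n :=
        auxRad_spec (mem_ball_self (auxRad_pos (hΔcont n) (hεpos n)))
          (mem_ball.2 hx₀ball)
      rw [hΔ0 x₀ n hn, sub_zero] at hosc
      exact le_trans (hterm_norm n x y) hosc
  obtain ⟨Kφ, hKφ⟩ := auxPhi_lipschitz (X := X)
  have hφcont : Continuous (auxPhi X) := hKφ.continuous
  have hterm_contx : ∀ n y, Continuous fun x => term n x y := by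
    intro n y
    simp only [htermdef]
    refine Continuous.smul ?_ (hΔcont n)
    exact hφcont.comp
      (((hρcont n).inv₀ fun x => (hρpos n x).ne').smul (continuous_const.sub continuous_id))
  refine ⟨f, ?_, ?_, ?_⟩
  · -- diagonal
    intro x
    have hdiag : ∀ n, term n x x = Δ n x := by
      intro n
      simp only [htermdef, sub_self, smul_zero, auxPhi_zero, one_smul]
    rw [hfeq x x]
    rw [Finset.sum_congr rfl fun n _ => hdiag n]
    rw [Finset.sum_range_sub (f := fun n => gs n x)]
    rw [hN x (N x) le_rfl]
    abel
  · -- continuity in x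
    intro y
    rw [continuous_iff_continuousAt]
    intro x₀
    obtain ⟨δ₀, hδ₀pos, hδ₀⟩ := hkey x₀ y
    rw [Metric.continuousAt_iff]
    intro ε' hε'
    obtain ⟨M₁, hM₁⟩ := exists_pow_lt_of_lt_one (show (0:ℝ) < ε'/8 by linarith)
      (by norm_num : (1/2:ℝ) < 1)
    set M := max (N x₀) M₁ with hMdef
    have hεM : (1/2:ℝ)^M ≤ (1/2:ℝ)^M₁ :=
      pow_le_pow_of_le_one (by norm_num) (by norm_num) (le_max_right _ _)
    set P : X → Z := fun x => gs 0 x + ∑ n ∈ Finset.range M, term n x y with hPdef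
    have hPcont : ContinuousAt P x₀ :=
      ((hgs_cont 0).add (continuous_finset_sum _ fun n _ => hterm_contx n y)).continuousAt
    obtain ⟨δ₁, hδ₁pos, hδ₁⟩ := Metric.continuousAt_iff.1 hPcont (ε'/2) (by linarith)
    refine ⟨min δ₀ δ₁, lt_min hδ₀pos hδ₁pos, fun {x} hx => ?_⟩
    have hx₀ : dist x x₀ < δ₀ := lt_of_lt_of_le hx (min_le_left _ _)
    have hx₁ : dist x x₀ < δ₁ := lt_of_lt_of_le hx (min_le_right _ _)
    have hsplit : ∀ x, f x y = P x + ∑' n, term (n + M) x y := by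
      intro x
      simp only [hfdef, hPdef]
      rw [← (hsummable x y).sum_add_tsum_nat_add M, add_assoc]
    have htail : ∀ x, dist x x₀ < δ₀ → ‖∑' n, term (n + M) x y‖ ≤ 4 * (1/2:ℝ)^M := by
      intro x hx
      have heq : (∑' n, term (n + M) x y) = ∑ n ∈ Finset.range (N x), term (n + M) x y :=
        tsum_eq_sum fun n hn => hterm_stab (n+M) x y
          (le_trans (Nat.le_of_not_lt fun h => hn (Finset.mem_range.2 h)) (Nat.le_add_right _ _))
      rw [heq]
      calc ‖∑ n ∈ Finset.range (N x), term (n + M) x y‖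
          ≤ ∑ n ∈ Finset.range (N x), ‖term (n + M) x y‖ := norm_sum_le _ _
        _ ≤ ∑ n ∈ Finset.range (N x), (1/2:ℝ)^(n+M) := by
            refine Finset.sum_le_sum fun n _ => ?_
            exact hδ₀ x hx (n+M) (le_trans (le_max_left _ _) (Nat.le_add_left M n))
        _ = (1/2:ℝ)^M * ∑ n ∈ Finset.range (N x), (1/2:ℝ)^n := by
            rw [Finset.mul_sum]
            refine Finset.sum_congr rfl fun n _ => ?_
            rw [pow_add]
            ring
        _ ≤ (1/2:ℝ)^M * 2 :=
            mul_le_mul_of_nonneg_left (sum_geometric_two_le _) (by positivity)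
        _ ≤ 4 * (1/2:ℝ)^M := by
            have : (0:ℝ) < (1/2:ℝ)^M := by positivity
            linarith
    have htail₀ : (∑' n, term (n + M) x₀ y) = 0 := by
      have : ∀ n, term (n + M) x₀ y = 0 := fun n =>
        hterm_stab (n+M) x₀ y (le_trans (le_max_left _ _) (Nat.le_add_left M n))
      calc (∑' n, term (n + M) x₀ y) = ∑' _ : ℕ, (0:Z) := by
            exact tsum_congr this
        _ = 0 := tsum_zero
    rw [dist_eq_norm, hsplit x, hsplit x₀, htail₀, add_zero]
    have hPd : ‖P x - P x₀‖ < ε'/2 := by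
      have := hδ₁ hx₁
      rwa [dist_eq_norm] at this
    calc ‖P x + (∑' n, term (n + M) x y) - P x₀‖
        = ‖(P x - P x₀) + (∑' n, term (n + M) x y)‖ := by rw [add_sub_right_comm]
      _ ≤ ‖P x - P x₀‖ + ‖∑' n, term (n + M) x y‖ := norm_add_le _ _
      _ < ε'/2 + 4 * (1/2:ℝ)^M := by
          have h2 := htail x hx₀
          linarith
      _ ≤ ε'/2 + 4 * (1/2:ℝ)^M₁ := by linarith
      _ < ε'/2 + 4 * (ε'/8) := by linarith
      _ = ε' := by ring
  · -- Lipschitz and differentiable in y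
    intro x
    have hfx : f x = fun y => gs 0 x + ∑ n ∈ Finset.range (N x), term n x y :=
      funext fun y => hfeq x y
    constructor
    · -- Lipschitz
      have hlip : ∀ n, ∃ K, LipschitzWith K (fun y => term n x y) := by
        intro n
        have h1 : LipschitzWith ‖(ρ n x)⁻¹‖₊ (fun y : X => (ρ n x)⁻¹ • (y - x)) := by
          refine LipschitzWith.of_dist_le_mul fun a b => ?_
          rw [dist_eq_norm, dist_eq_norm]
          have heq : (ρ n x)⁻¹ • (a - x) - (ρ n x)⁻¹ • (b - x) = (ρ n x)⁻¹ • (a - b) := by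
            rw [← smul_sub]
            congr 1
            abel
          rw [heq, norm_smul, coe_nnnorm]
        have h2 : LipschitzWith (Kφ * ‖(ρ n x)⁻¹‖₊)
            (fun y => auxPhi X ((ρ n x)⁻¹ • (y - x))) := hKφ.comp h1
        refine ⟨Kφ * ‖(ρ n x)⁻¹‖₊ * ‖Δ n x‖₊, LipschitzWith.of_dist_le_mul fun a b => ?_⟩
        simp only [htermdef]
        rw [dist_eq_norm, ← sub_smul, norm_smul, Real.norm_eq_abs]
        have h3 := h2.dist_le_mul a b
        rw [Real.dist_eq] at h3
        calc |auxPhi X ((ρ n x)⁻¹ • (a - x)) - auxPhi X ((ρ n x)⁻¹ • (b - x))| * ‖Δ n x‖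
            ≤ ((Kφ * ‖(ρ n x)⁻¹‖₊ : ℝ≥0) * dist a b) * ‖Δ n x‖ :=
              mul_le_mul_of_nonneg_right h3 (norm_nonneg _)
          _ = (Kφ * ‖(ρ n x)⁻¹‖₊ * ‖Δ n x‖₊ : ℝ≥0) * dist a b := by
              push_cast [coe_nnnorm]
              ring
      have hsumlip : ∀ s : Finset ℕ, ∃ K : ℝ≥0,
          LipschitzWith K (fun y => ∑ n ∈ s, term n x y) := by
        intro s
        induction s using Finset.induction with
        | empty =>
            refine ⟨0, ?_⟩
            simpa using LipschitzWith.const (0:Z)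
        | insert a s hni ih =>
            obtain ⟨K₁, h₁⟩ := hlip a
            obtain ⟨K₂, h₂⟩ := ih
            refine ⟨K₁ + K₂, ?_⟩
            have := h₁.add h₂
            simpa [Finset.sum_insert hni] using this
      obtain ⟨K, hK⟩ := hsumlip (Finset.range (N x))
      refine ⟨0 + K, ?_⟩
      rw [hfx]
      exact (LipschitzWith.const (gs 0 x)).add hK
    · -- differentiable
      rw [hfx]
      refine (differentiable_const _).add ?_
      refine Differentiable.fun_sum fun n _ => ?_
      have hφd := auxPhi_differentiable hnorm
      have hin : Differentiable ℝ (fun y : X => (ρ n x)⁻¹ • (y - x)) :=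
        (differentiable_id.sub (differentiable_const x)).const_smul _
      exact (hφd.comp hin).smul_const (Δ n x)
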